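/- arXiv:1005.1974 — 9 statements merged into one kernel-verified Lean document; each statement's English description precedes it below -/
import Mathlib

section
/- A finite union of CLP-compact subspaces of a topological space is CLP-compact. -/
/-- CLP-compact: every clopen cover has a finite subcover. -/
def CLPCompact (X : Type*) [TopologicalSpace X] : Prop :=
  ∀ C : Set (Set X), (∀ U ∈ C, IsClopen U) → ⋃₀ C = Set.univ →
    ∃ D ⊆ C, D.Finite ∧ ⋃₀ D = Set.univ

/-- A finite union of CLP-compact subspaces is CLP-compact. -/
theorem clp_compact_of_finite_union {X : Type*} [TopologicalSpace X] (n : ℕ)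
    (A : Fin n → Set X) (h : ∀ i, CLPCompact (A i)) (hcover : ⋃ i, A i = Set.univ) :
    CLPCompact X := by
  intro C hC hCcov
  -- pulled-back cover on each A i
  have key : ∀ i : Fin n, ∃ E ⊆ C, E.Finite ∧ A i ⊆ ⋃₀ E := by
    intro i
    set Ci : Set (Set (A i)) := (fun U => (Subtype.val : A i → X) ⁻¹' U) '' C with hCi
    have hclopen : ∀ V ∈ Ci, IsClopen V := by
      rintro V ⟨U, hU, rfl⟩
      exact ⟨(hC U hU).1.preimage continuous_subtype_val,
             (hC U hU).2.preimage continuous_subtype_val⟩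
    have hcov : ⋃₀ Ci = Set.univ := by
      ext x
      simp only [Set.mem_sUnion, Set.mem_univ, iff_true]
      have : (x : X) ∈ ⋃₀ C := hCcov ▸ Set.mem_univ _
      obtain ⟨U, hU, hxU⟩ := this
      exact ⟨_, ⟨U, hU, rfl⟩, hxU⟩
    obtain ⟨D, hDsub, hDfin, hDcov⟩ := h i Ci hclopen hcov
    -- choose originals
    choose f hf hf2 using fun V (hV : V ∈ D) => hDsub hV
    refine ⟨Set.image (fun p : {V // V ∈ D} => f p.1 p.2) Set.univ, ?_, ?_, ?_⟩
    · rintro U ⟨⟨V, hV⟩, -, rfl⟩; exact hf V hV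
    · have := hDfin.to_subtype
      exact Set.Finite.image _ Set.finite_univ
    · intro x hx
      have : (⟨x, hx⟩ : A i) ∈ ⋃₀ D := hDcov ▸ Set.mem_univ _
      obtain ⟨V, hV, hxV⟩ := this
      refine ⟨f V hV, ⟨⟨V, hV⟩, Set.mem_univ _, rfl⟩, ?_⟩
      have h2 := hf2 V hV
      rw [← h2] at hxV
      exact hxV
  choose E hEsub hEfin hEcov using key
  refine ⟨⋃ i, E i, Set.iUnion_subset hEsub, Set.finite_iUnion hEfin, ?_⟩
  apply Set.eq_univ_of_univ_subset
  intro x _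
  have : x ∈ ⋃ i, A i := hcover ▸ Set.mem_univ _
  obtain ⟨i, hi⟩ := Set.mem_iUnion.mp this
  obtain ⟨U, hU, hxU⟩ := hEcov i hi
  exact ⟨U, Set.mem_iUnion.mpr ⟨i, hU⟩, hxU⟩
end

section
/- If a finite product X = ∏_{i∈n} X_i of CLP-compact spaces is CLP-rectangular, then X is CLP-compact. -/
/-- A finite product is CLP-rectangular if every point of every clopen set is contained
in a clopen rectangle included in that set. -/
def CLPRectangular {n : ℕ} (X : Fin n → Type*) [∀ i, TopologicalSpace (X i)] : Prop :=
  ∀ U : Set (∀ i, X i), IsClopen U → ∀ x ∈ U,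
    ∃ R : ∀ i, Set (X i), (∀ i, IsClopen (R i)) ∧
      x ∈ Set.univ.pi R ∧ Set.univ.pi R ⊆ U

/-- Any cover of a finite product of CLP-compact spaces by clopen rectangles has a
finite subcover. -/
lemma rect_cover_finite_subcover : ∀ (n : ℕ) (X : Fin n → Type u)
    [∀ i, TopologicalSpace (X i)], (∀ i, CLPCompact (X i)) →
    ∀ {ι : Type v} (R : ι → ∀ i, Set (X i)),
    (∀ j i, IsClopen (R j i)) → (∀ x, ∃ j, x ∈ Set.univ.pi (R j)) →
    ∃ s : Set ι, s.Finite ∧ ∀ x, ∃ j ∈ s, x ∈ Set.univ.pi (R j) := by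
  intro n
  induction n with
  | zero =>
    intro X _ _ ι R _ hcov
    obtain ⟨j, hj⟩ := hcov (fun i => i.elim0)
    refine ⟨{j}, Set.finite_singleton j, fun x => ⟨j, rfl, ?_⟩⟩
    have hx : x = fun i => i.elim0 := funext fun i => i.elim0
    rw [hx]; exact hj
  | succ n IH =>
    intro X _ hX ι R hclopen hcov
    have key : ∀ y : X 0, ∃ t : Set ι, t.Finite ∧ (∀ j ∈ t, y ∈ R j 0) ∧
        ∀ z : ∀ i : Fin n, X i.succ, ∃ j ∈ t, ∀ i : Fin n, z i ∈ R j i.succ := by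
      intro y
      have hsub : ∀ z : ∀ i : Fin n, X i.succ, ∃ j : {j : ι // y ∈ R j 0},
          z ∈ Set.univ.pi (fun i : Fin n => R j.1 i.succ) := by
        intro z
        obtain ⟨j, hj⟩ := hcov (Fin.cons y z)
        rw [Set.mem_univ_pi] at hj
        refine ⟨⟨j, hj 0⟩, ?_⟩
        rw [Set.mem_univ_pi]
        intro i
        simpa using hj i.succ
      obtain ⟨s, hsfin, hs⟩ := IH (fun i => X i.succ) (fun i => hX i.succ)
        (fun (j : {j : ι // y ∈ R j 0}) (i : Fin n) => R j.1 i.succ)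
        (fun j i => hclopen j.1 i.succ) hsub
      refine ⟨Subtype.val '' s, hsfin.image _, ?_, ?_⟩
      · rintro j ⟨j', _, rfl⟩; exact j'.2
      · intro z
        obtain ⟨j, hjs, hj⟩ := hs z
        rw [Set.mem_univ_pi] at hj
        exact ⟨j.1, ⟨j, hjs, rfl⟩, hj⟩
    choose t htfin hty htcov using key
    set A : X 0 → Set (X 0) := fun y => ⋂ j ∈ t y, R j 0 with hA
    have hAclopen : ∀ y, IsClopen (A y) :=
      fun y => (htfin y).isClopen_biInter (fun j _ => hclopen j 0)
    have hmem : ∀ y, y ∈ A y := fun y => Set.mem_iInter₂.2 (hty y)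
    obtain ⟨D, hDsub, hDfin, hDcov⟩ := hX 0 (Set.range A)
      (by rintro U ⟨y, rfl⟩; exact hAclopen y)
      (by
        ext p
        simp only [Set.mem_sUnion, Set.mem_univ, iff_true]
        exact ⟨A p, ⟨p, rfl⟩, hmem p⟩)
    have hrep : ∀ V : D, ∃ y, A y = (V : Set (X 0)) := fun V => hDsub V.2
    choose rep hrep using hrep
    haveI : Finite ↥D := hDfin.to_subtype
    refine ⟨⋃ V : D, t (rep V), Set.finite_iUnion (fun V => htfin _), ?_⟩
    intro x
    have hx0 : x 0 ∈ ⋃₀ D := by rw [hDcov]; exact Set.mem_univ _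
    obtain ⟨V, hVD, hxV⟩ := hx0
    obtain ⟨j, hjt, hj⟩ := htcov (rep ⟨V, hVD⟩) (fun i => x i.succ)
    refine ⟨j, Set.mem_iUnion.2 ⟨⟨V, hVD⟩, hjt⟩, ?_⟩
    rw [Set.mem_univ_pi]
    intro i
    refine Fin.cases ?_ (fun i' => hj i') i
    have : x 0 ∈ A (rep ⟨V, hVD⟩) := by rw [hrep ⟨V, hVD⟩]; exact hxV
    exact Set.mem_iInter₂.1 this j hjt

/-- A CLP-rectangular finite product of CLP-compact spaces is CLP-compact. -/
theorem clp_compact_of_clp_rectangular {n : ℕ} (X : Fin n → Type*)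
    [∀ i, TopologicalSpace (X i)] (hX : ∀ i, CLPCompact (X i))
    (hrect : CLPRectangular X) : CLPCompact (∀ i, X i) := by
  intro C hC hCcov
  have hpt : ∀ x : ∀ i, X i, ∃ U ∈ C, ∃ R : ∀ i, Set (X i),
      (∀ i, IsClopen (R i)) ∧ x ∈ Set.univ.pi R ∧ Set.univ.pi R ⊆ U := by
    intro x
    have : x ∈ ⋃₀ C := by rw [hCcov]; exact Set.mem_univ _
    obtain ⟨U, hUC, hxU⟩ := this
    obtain ⟨R, hR⟩ := hrect U (hC U hUC) x hxU
    exact ⟨U, hUC, R, hR⟩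
  choose U hUC R hRclopen hxR hRU using hpt
  obtain ⟨s, hsfin, hs⟩ := rect_cover_finite_subcover n X hX R hRclopen
    (fun x => ⟨x, hxR x⟩)
  refine ⟨U '' s, ?_, hsfin.image _, ?_⟩
  · rintro V ⟨x, _, rfl⟩; exact hUC x
  · ext p
    simp only [Set.mem_sUnion, Set.mem_univ, iff_true]
    obtain ⟨j, hjs, hj⟩ := hs p
    exact ⟨U j, ⟨j, hjs, rfl⟩, hRU j hj⟩
end

section
/- If a finite product of topological spaces is CLP-compact, then it is CLP-rectangular. -/
/-! The clopen boxes around `x` are closed under finite intersections, so by CLP-compactness,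
applied to the directed clopen cover by the sets `U ∪ Bᶜ`, some box lies in `U` as soon as their
intersection does. A point `y` of that intersection has each `y i` in every clopen set containing
`x i`; moving from `x` to `y` one coordinate at a time stays in `U`, because each slice of `U`
along a coordinate is clopen in that factor. -/

open Set Function

section CLPCompact

variable {X : Type*} [TopologicalSpace X]

theorem CLPCompact.univ_mem_of_directedOn (h : CLPCompact X) {C : Set (Set X)}
    (hC : ∀ U ∈ C, IsClopen U) (hne : C.Nonempty) (hdir : DirectedOn (· ⊆ ·) C)
    (hcover : ⋃₀ C = univ) : univ ∈ C := by
  obtain ⟨D, hDC, hDfin, hDcover⟩ := h C hC hcover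
  obtain ⟨W, hWC, hDW⟩ := Finset.sup_le_of_le_directed C hne hdir hDfin.toFinset
    fun V hV => ⟨V, hDC (hDfin.mem_toFinset.1 hV), le_rfl⟩
  rw [Finset.sup_id_set_eq_sUnion, hDfin.coe_toFinset, hDcover] at hDW
  rwa [← univ_subset_iff.1 hDW]

theorem CLPCompact.exists_subset_of_sInter_subset (h : CLPCompact X) {U : Set X}
    (hU : IsClopen U) {F : Set (Set X)} (hF : ∀ V ∈ F, IsClopen V) (hne : F.Nonempty)
    (hdir : DirectedOn (· ⊇ ·) F) (hFU : ⋂₀ F ⊆ U) : ∃ V ∈ F, V ⊆ U := by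
  have hcover : ⋃₀ ((fun V => U ∪ Vᶜ) '' F) = univ := by
    refine eq_univ_of_forall fun z => ?_
    by_cases hz : z ∈ U
    · obtain ⟨V, hV⟩ := hne
      exact ⟨_, mem_image_of_mem _ hV, .inl hz⟩
    · obtain ⟨V, hV, hzV⟩ : ∃ V ∈ F, z ∉ V := by
        simpa [mem_sInter] using mt (@hFU z) hz
      exact ⟨_, mem_image_of_mem _ hV, .inr hzV⟩
  obtain ⟨V, hV, hVU⟩ := h.univ_mem_of_directedOn
    (by rintro _ ⟨V, hV, rfl⟩; exact hU.union (hF V hV).compl) (hne.image _)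
    (hdir.mono_comp fun _ _ h => union_subset_union_right U (compl_subset_compl.2 h)) hcover
  exact ⟨V, hV, fun z hz => (eq_univ_iff_forall.1 hVU z).resolve_right (not_not_intro hz)⟩

end CLPCompact

section Pi

variable {ι : Type*} {X : ι → Type*} [∀ i, TopologicalSpace (X i)]

def clopenBoxesAt (x : ∀ i, X i) : Set (Set (∀ i, X i)) :=
  (univ.pi ·) '' {R | (∀ i, IsClopen (R i)) ∧ x ∈ univ.pi R}

theorem isClopen_univ_pi [Finite ι] {R : ∀ i, Set (X i)} (hR : ∀ i, IsClopen (R i)) :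
    IsClopen (univ.pi R) :=
  ⟨isClosed_set_pi fun i _ => (hR i).isClosed, isOpen_set_pi finite_univ fun i _ => (hR i).isOpen⟩

theorem isClopen_of_mem_clopenBoxesAt [Finite ι] {x : ∀ i, X i} {B : Set (∀ i, X i)}
    (hB : B ∈ clopenBoxesAt x) : IsClopen B := by
  obtain ⟨R, ⟨hR, -⟩, rfl⟩ := hB
  exact isClopen_univ_pi hR

theorem clopenBoxesAt_nonempty (x : ∀ i, X i) : (clopenBoxesAt x).Nonempty :=
  ⟨_, mem_image_of_mem _ ⟨fun _ => isClopen_univ, mem_univ_pi.2 fun _ => mem_univ _⟩⟩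

theorem directedOn_clopenBoxesAt (x : ∀ i, X i) : DirectedOn (· ⊇ ·) (clopenBoxesAt x) := by
  rintro _ ⟨R, ⟨hR, hxR⟩, rfl⟩ _ ⟨R', ⟨hR', hxR'⟩, rfl⟩
  refine ⟨_, ⟨fun i => R i ∩ R' i, ⟨fun i => (hR i).inter (hR' i), ?_⟩, rfl⟩, ?_, ?_⟩
  · rw [pi_inter_distrib]
    exact ⟨hxR, hxR'⟩
  exacts [pi_mono fun _ _ => inter_subset_left, pi_mono fun _ _ => inter_subset_right]

theorem eval_preimage_mem_clopenBoxesAt [DecidableEq ι] {x : ∀ i, X i} {i : ι} {A : Set (X i)}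
    (hA : IsClopen A) (hxA : x i ∈ A) : eval i ⁻¹' A ∈ clopenBoxesAt x := by
  refine ⟨update (fun j => univ) i A, ⟨fun j => ?_, ?_⟩, univ_pi_update_univ i A⟩
  · rcases eq_or_ne j i with rfl | hji
    · simpa using hA
    · simpa [hji] using isClopen_univ
  · simpa [univ_pi_update_univ] using hxA

theorem Finset.piecewise_mem_of_isClopen [DecidableEq ι] {U : Set (∀ i, X i)} (hU : IsClopen U)
    {x y : ∀ i, X i} (hx : x ∈ U) (hxy : ∀ i (A : Set (X i)), IsClopen A → x i ∈ A → y i ∈ A)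
    (s : Finset ι) : s.piecewise y x ∈ U := by
  induction s using Finset.induction_on with
  | empty => simpa
  | insert i s hi ih =>
    have hslice : IsClopen ((update (s.piecewise y x) i) ⁻¹' U) :=
      hU.preimage (continuous_const.update i continuous_id)
    rw [Finset.piecewise_insert]
    refine hxy i _ hslice ?_
    show update _ i (x i) ∈ U
    rwa [← Finset.piecewise_eq_of_notMem s y x hi, update_eq_self]

theorem sInter_clopenBoxesAt_subset [Fintype ι] {U : Set (∀ i, X i)} (hU : IsClopen U)
    {x : ∀ i, X i} (hx : x ∈ U) : ⋂₀ clopenBoxesAt x ⊆ U := by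
  classical
  intro y hy
  rw [← Finset.piecewise_univ y x]
  exact Finset.univ.piecewise_mem_of_isClopen hU hx fun i A hA hxA =>
    hy _ (eval_preimage_mem_clopenBoxesAt hA hxA)

end Pi

/-- A CLP-compact finite product is CLP-rectangular. -/
theorem clp_rectangular_of_clp_compact {n : ℕ} (X : Fin n → Type*)
    [∀ i, TopologicalSpace (X i)] (h : CLPCompact (∀ i, X i)) :
    CLPRectangular X := by
  intro U hU x hx
  obtain ⟨_, ⟨R, ⟨hR, hxR⟩, rfl⟩, hRU⟩ := h.exists_subset_of_sInter_subset hU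
    (fun _ => isClopen_of_mem_clopenBoxesAt) (clopenBoxesAt_nonempty x)
    (directedOn_clopenBoxesAt x) (sInter_clopenBoxesAt_subset hU hx)
  exact ⟨R, hR, hxR, hRU⟩
end

section
/- If F is a family of pairwise disjoint non-empty closed subsets of the Čech–Stone remainder ℕ* = βℕ \ ℕ, then the space X(F) is Hausdorff. -/
/-- ℕ* : the nonprincipal ultrafilters on ℕ, with the topology inherited from βℕ. -/
def NStar : Type := {U : Ultrafilter ℕ // (U : Filter ℕ) ≤ Filter.cofinite}

instance : TopologicalSpace NStar := instTopologicalSpaceSubtype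

/-- A* : the set of nonprincipal ultrafilters containing A. -/
def AStar (A : Set ℕ) : Set NStar := {U | A ∈ U.1}

/-- The space X(F): underlying set ℕ ⊔ F. -/
def XF (F : Set (Set NStar)) : Type := ℕ ⊕ F

/-- The coarsest topology making each {n} (n ∈ ℕ) open, and each {K} ∪ A open
whenever K ∈ F, A ⊆ ℕ and K ⊆ A*. -/
instance (F : Set (Set NStar)) : TopologicalSpace (XF F) :=
  TopologicalSpace.generateFrom
    ({S | ∃ n : ℕ, S = {Sum.inl n}} ∪
     {S | ∃ (K : F) (A : Set ℕ), (K : Set NStar) ⊆ AStar A ∧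
        S = insert (Sum.inr K) (Sum.inl '' A)})

/-!
Two distinct points of X(F) are separated as follows: natural numbers are isolated, a number `n`
and a point `K ∈ F` are separated by `{n}` and `{K} ∪ (ℕ \ {n})` since `K ⊆ (ℕ \ {n})*`, and two
points `K ≠ L` of `F` by `{K} ∪ A` and `{L} ∪ (ℕ \ A)`, where `A*` is a clopen subset of ℕ*
containing `K` and disjoint from `L`. Such an `A` exists because `K` is compact and the sets `A*`
form a basis of βℕ that is closed under finite unions.
-/

namespace Ultrafilter

variable {α : Type*}

theorem isClosed_setOf_le_cofinite :
    IsClosed {U : Ultrafilter α | (U : Filter α) ≤ Filter.cofinite} := by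
  simp only [Filter.le_cofinite_iff_compl_singleton_mem, Set.ofPred_forall]
  exact isClosed_iInter fun a => ultrafilter_isClosed_basic {a}ᶜ

theorem exists_separating_set {K L : Set (Ultrafilter α)} (hK : IsCompact K)
    (hL : IsClosed L) (hKL : Disjoint K L) :
    ∃ A : Set α, (∀ U ∈ K, A ∈ U) ∧ ∀ U ∈ L, Aᶜ ∈ U := by
  let S : Set (Set α) := {A | ∀ U ∈ L, Aᶜ ∈ U}
  have hcover : K ⊆ ⋃ A : S, {U | (A : Set α) ∈ U} := by
    intro U hU
    obtain ⟨_, ⟨A, rfl⟩, hUA, hAL⟩ := ultrafilterBasis_is_basis.exists_subset_of_mem_open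
      (Set.disjoint_left.1 hKL hU) hL.isOpen_compl
    refine Set.mem_iUnion.2 ⟨⟨A, fun V hV => ?_⟩, hUA⟩
    exact Ultrafilter.compl_mem_iff_notMem.2 fun hVA => hAL hVA hV
  have hdirected : Directed (· ⊆ ·) fun A : S => {U : Ultrafilter α | (A : Set α) ∈ U} := by
    rintro ⟨A, hA⟩ ⟨B, hB⟩
    refine ⟨⟨A ∪ B, fun U hU => ?_⟩, fun U hU => ?_, fun U hU => ?_⟩
    · rw [Set.compl_union]
      exact Filter.inter_mem (hA U hU) (hB U hU)
    · exact Filter.mem_of_superset hU Set.subset_union_left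
    · exact Filter.mem_of_superset hU Set.subset_union_right
  have : Nonempty S := ⟨⟨∅, fun U _ => Set.compl_empty ▸ Filter.univ_mem⟩⟩
  obtain ⟨⟨A, hA⟩, hKA⟩ :=
    hK.elim_directed_cover _ (fun A => ultrafilter_isOpen_basic _) hcover hdirected
  exact ⟨A, hKA, hA⟩

end Ultrafilter

namespace NStar

instance : CompactSpace NStar :=
  isCompact_iff_compactSpace.1 Ultrafilter.isClosed_setOf_le_cofinite.isCompact

theorem mem_AStar_compl_singleton (U : NStar) (n : ℕ) : U ∈ AStar {n}ᶜ :=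
  Filter.le_cofinite_iff_compl_singleton_mem.1 U.2 n

theorem exists_subset_AStar_of_isClosed {K L : Set NStar} (hK : IsClosed K) (hL : IsClosed L)
    (hKL : Disjoint K L) : ∃ A : Set ℕ, K ⊆ AStar A ∧ L ⊆ AStar Aᶜ := by
  have hK' : IsCompact (Subtype.val '' K) := hK.isCompact.image continuous_subtype_val
  have hL' : IsClosed (Subtype.val '' L) :=
    (hL.isCompact.image continuous_subtype_val).isClosed
  obtain ⟨A, hKA, hLA⟩ := Ultrafilter.exists_separating_set hK' hL'
    ((Set.disjoint_image_iff Subtype.val_injective).2 hKL)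
  exact ⟨A, fun U hU => hKA U.1 ⟨U, hU, rfl⟩, fun U hU => hLA U.1 ⟨U, hU, rfl⟩⟩

end NStar

namespace XF

variable {F : Set (Set NStar)}

theorem isOpen_singleton_inl (n : ℕ) : IsOpen ({Sum.inl n} : Set (XF F)) :=
  TopologicalSpace.isOpen_generateFrom_of_mem (Or.inl ⟨n, rfl⟩)

theorem isOpen_insert_inr_image_inl {K : F} {A : Set ℕ} (h : (K : Set NStar) ⊆ AStar A) :
    IsOpen (insert (Sum.inr K) (Sum.inl '' A) : Set (XF F)) :=
  TopologicalSpace.isOpen_generateFrom_of_mem (Or.inr ⟨K, A, h, rfl⟩)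

theorem disjoint_singleton_inl_insert_inr {n : ℕ} {B : Set ℕ} (hn : n ∉ B) (L : F) :
    Disjoint ({Sum.inl n} : Set (XF F)) (insert (Sum.inr L) (Sum.inl '' B)) := by
  refine Set.disjoint_singleton_left.2 ?_
  rintro (h | ⟨m, hm, h⟩)
  · cases h
  · exact hn (Sum.inl.inj h ▸ hm)

theorem disjoint_insert_inr_insert_inr {K L : F} (hKL : K ≠ L) {A B : Set ℕ}
    (hAB : Disjoint A B) :
    Disjoint (insert (Sum.inr K) (Sum.inl '' A) : Set (XF F))
      (insert (Sum.inr L) (Sum.inl '' B)) := by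
  rw [Set.disjoint_left]
  rintro x (rfl | ⟨a, ha, rfl⟩) (h | ⟨b, hb, h⟩)
  · exact hKL (Sum.inr.inj h)
  · cases h
  · cases h
  · exact Set.disjoint_left.1 hAB ha (Sum.inl.inj h ▸ hb)

theorem separatedNhds_inl_inr (n : ℕ) (K : F) :
    SeparatedNhds ({Sum.inl n} : Set (XF F)) {Sum.inr K} :=
  ⟨_, _, isOpen_singleton_inl n,
    isOpen_insert_inr_image_inl fun U _ => NStar.mem_AStar_compl_singleton U n,
    subset_rfl, Set.singleton_subset_iff.2 (Set.mem_insert _ _),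
    disjoint_singleton_inl_insert_inr (Set.notMem_compl_iff.2 (Set.mem_singleton n)) K⟩

theorem separatedNhds_inr_inr (hcl : ∀ K ∈ F, IsClosed K)
    (hdisj : ∀ K ∈ F, ∀ L ∈ F, K ≠ L → Disjoint K L) {K L : F} (hKL : K ≠ L) :
    SeparatedNhds ({Sum.inr K} : Set (XF F)) {Sum.inr L} := by
  obtain ⟨A, hKA, hLA⟩ := NStar.exists_subset_AStar_of_isClosed (hcl K K.2) (hcl L L.2)
    (hdisj K K.2 L L.2 (Subtype.coe_injective.ne hKL))
  exact ⟨_, _, isOpen_insert_inr_image_inl hKA, isOpen_insert_inr_image_inl hLA,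
    Set.singleton_subset_iff.2 (Set.mem_insert _ _),
    Set.singleton_subset_iff.2 (Set.mem_insert _ _),
    disjoint_insert_inr_insert_inr hKL disjoint_compl_right⟩

end XF

theorem xf_hausdorff_general (F : Set (Set NStar))
    (hcl : ∀ K ∈ F, IsClosed K)
    (hdisj : ∀ K ∈ F, ∀ L ∈ F, K ≠ L → Disjoint K L) :
    T2Space (XF F) := by
  refine ⟨fun x y hxy => ?_⟩
  suffices SeparatedNhds ({x} : Set (XF F)) {y} by
    obtain ⟨u, v, hu, hv, hxu, hyv, huv⟩ := this
    exact ⟨u, v, hu, hv, hxu rfl, hyv rfl, huv⟩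
  rcases x with n | K <;> rcases y with m | L
  · exact ⟨_, _, XF.isOpen_singleton_inl n, XF.isOpen_singleton_inl m, subset_rfl, subset_rfl,
      Set.disjoint_singleton.2 hxy⟩
  · exact XF.separatedNhds_inl_inr n L
  · exact (XF.separatedNhds_inl_inr m K).symm
  · exact XF.separatedNhds_inr_inr hcl hdisj fun h => hxy (congrArg Sum.inr h)

/-- If F consists of pairwise disjoint non-empty closed subsets of ℕ*,
then X(F) is Hausdorff. -/
theorem xf_hausdorff (F : Set (Set NStar)) (hne : ∀ K ∈ F, K.Nonempty)
    (hcl : ∀ K ∈ F, IsClosed K)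
    (hdisj : ∀ K ∈ F, ∀ L ∈ F, K ≠ L → Disjoint K L) :
    T2Space (XF F) :=
  xf_hausdorff_general F hcl hdisj
end

section
/- In the space X(F) (with F a family of pairwise disjoint non-empty closed subsets of ℕ*), if U is a clopen set whose trace on ℕ is contained in the initial segment N = {0,…,N−1}, then U ⊆ N; more generally in a finite product ∏_{i<n} X(F_i), if a clopen set U satisfies U ∩ ℕⁿ ⊆ 𝕊ᴺ (the union of stripes {x ∈ ℕⁿ : x_i < N}), then U ⊆ Sᴺ (the union of stripes {x : x_i ∈ N} in the product). -/
theorem NStar.Ici_mem (u : NStar) (N : ℕ) : Set.Ici N ∈ (u.1 : Filter ℕ) :=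
  u.2 (Nat.cofinite_eq_atTop ▸ Filter.Ici_mem_atTop N)

namespace XF

variable {F : Set (Set NStar)}

theorem preimage_inl_mem_of_isOpen {V : Set (XF F)} (hV : IsOpen V) {K : F} {u : NStar}
    (hu : u ∈ (K : Set NStar)) (hK : Sum.inr K ∈ V) :
    (Sum.inl : ℕ → XF F) ⁻¹' V ∈ (u.1 : Filter ℕ) := by
  induction hV with
  | basic S hS =>
    rcases hS with ⟨m, rfl⟩ | ⟨K', A, hK'A, rfl⟩
    · exact absurd hK Sum.inr_ne_inl
    · obtain rfl : K' = K := by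
        rcases hK with h | ⟨_, _, h⟩
        · exact (Sum.inr.inj h).symm
        · exact absurd h Sum.inl_ne_inr
      exact Filter.mem_of_superset (hK'A hu) fun a ha => Or.inr ⟨a, ha, rfl⟩
  | univ => exact Filter.univ_mem
  | inter S T _ _ ihS ihT => exact Filter.inter_mem (ihS hK.1) (ihT hK.2)
  | sUnion 𝒮 _ ih =>
    obtain ⟨T, hT𝒮, hKT⟩ := hK
    exact Filter.mem_of_superset (ih T hT𝒮 hKT) fun a ha => ⟨T, hT𝒮, ha⟩

theorem exists_inl_ge_mem_of_isOpen (hne : ∀ K ∈ F, K.Nonempty) {V : Set (XF F)}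
    (hV : IsOpen V) {y : XF F} (hy : y ∈ V) (N : ℕ) (hyN : ∀ m < N, y ≠ Sum.inl m) :
    ∃ a, N ≤ a ∧ (Sum.inl a : XF F) ∈ V := by
  rcases y with m | K
  · exact ⟨m, not_lt.mp fun hm => hyN m hm rfl, hy⟩
  · obtain ⟨u, hu⟩ := hne K K.2
    exact Filter.nonempty_of_mem
      (Filter.inter_mem (u.Ici_mem N) (preimage_inl_mem_of_isOpen hV hu hy))

end XF

theorem clopen_subset_stripes_general (n N : ℕ) (F : Fin n → Set (Set NStar))
    (hne : ∀ i, ∀ K ∈ F i, Set.Nonempty K)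
    (U : Set (∀ i, XF (F i))) (hU : IsClopen U)
    (htrace : ∀ x : Fin n → ℕ, (fun i => (Sum.inl (x i) : XF (F i))) ∈ U → ∃ i, x i < N) :
    ∀ y ∈ U, ∃ i, ∃ m : ℕ, m < N ∧ y i = Sum.inl m := by
  intro y hy
  by_contra! hyN
  obtain ⟨W, hW, hWU⟩ := isOpen_pi_iff'.mp hU.isOpen y hy
  choose x hxN hxW using fun i =>
    XF.exists_inl_ge_mem_of_isOpen (hne i) (hW i).1 (hW i).2 N (hyN i)
  obtain ⟨i, hi⟩ := htrace x (hWU fun i _ => hxW i)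
  exact (hi.trans_le (hxN i)).false

/-- In X = ∏_{i<n} X(F_i), if a clopen U has trace on ℕⁿ contained in the stripe
union 𝕊ᴺ, then U ⊆ Sᴺ: every point of U has some coordinate equal to some m < N. -/
theorem clopen_subset_stripes (n N : ℕ) (F : Fin n → Set (Set NStar))
    (hne : ∀ i, ∀ K ∈ F i, Set.Nonempty K) (hcl : ∀ i, ∀ K ∈ F i, IsClosed K)
    (hdisj : ∀ i, ∀ K ∈ F i, ∀ L ∈ F i, K ≠ L → Disjoint K L)
    (U : Set (∀ i, XF (F i))) (hU : IsClopen U)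
    (htrace : ∀ x : Fin n → ℕ, (fun i => (Sum.inl (x i) : XF (F i))) ∈ U → ∃ i, x i < N) :
    ∀ y ∈ U, ∃ i, ∃ m : ℕ, m < N ∧ y i = Sum.inl m :=
  clopen_subset_stripes_general n N F hne U hU htrace
end

section
/- Suppose that for every finite sequence p : n → ω and every clopen set U in the product X_p = ∏_{i<n} X(F_{p(i)}) there is N ∈ ω with either U ⊆ Sᴺ_p or Tᴺ_p ⊆ U. Then every finite product X_p is CLP-compact. -/
open Set

section CLPCompactSet

variable {X Y : Type*} [TopologicalSpace X] [TopologicalSpace Y]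

def IsCLPCompact (s : Set X) : Prop :=
  ∀ C : Set (Set X), (∀ U ∈ C, IsClopen U) → s ⊆ ⋃₀ C → ∃ D ⊆ C, D.Finite ∧ s ⊆ ⋃₀ D

theorem CLPCompact.of_compactSpace [CompactSpace X] : CLPCompact X := by
  intro C hC hcov
  obtain ⟨D, hDC, hD, hcovD⟩ :=
    isCompact_univ.elim_finite_subcover_image (fun U hU => (hC U hU).isOpen)
      (sUnion_eq_biUnion ▸ hcov.ge)
  exact ⟨D, hDC, hD, univ_subset_iff.mp (sUnion_eq_biUnion ▸ hcovD)⟩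

theorem CLPCompact.isCLPCompact_range (hY : CLPCompact Y) {f : Y → X} (hf : Continuous f) :
    IsCLPCompact (range f) := by
  intro C hC hcov
  have hcov' : ⋃₀ ((f ⁻¹' ·) '' C) = univ := by
    rw [sUnion_image, ← preimage_iUnion₂, ← sUnion_eq_biUnion, ← univ_subset_iff]
    exact fun y _ => hcov (mem_range_self y)
  obtain ⟨D, hDC, hD, hcovD⟩ := exists_subset_image_finite_and.mp <|
    hY _ (forall_mem_image.mpr fun U hU => (hC U hU).preimage hf) hcov'
  refine ⟨D, hDC, hD, ?_⟩
  rintro _ ⟨y, rfl⟩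
  simpa [sUnion_image] using hcovD.ge (mem_univ y)

theorem isCLPCompact_iUnion {ι : Type*} [Finite ι] {s : ι → Set X}
    (hs : ∀ i, IsCLPCompact (s i)) : IsCLPCompact (⋃ i, s i) := by
  intro C hC hcov
  choose D hDC hD hcovD using fun i => hs i C hC ((subset_iUnion s i).trans hcov)
  exact ⟨⋃ i, D i, iUnion_subset hDC, finite_iUnion hD,
    iUnion_subset fun i => (hcovD i).trans (sUnion_mono (subset_iUnion D i))⟩

theorem clpCompact_of_forall_isCLPCompact_compl (x : X)
    (h : ∀ U, IsClopen U → x ∈ U → ∃ s, IsCLPCompact s ∧ Uᶜ ⊆ s) : CLPCompact X := by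
  intro C hC hcovC
  obtain ⟨U, hUC, hxU⟩ := hcovC.ge (mem_univ x)
  obtain ⟨s, hs, hUs⟩ := h U (hC U hUC) hxU
  obtain ⟨D, hDC, hD, hcovD⟩ := hs C hC (hcovC ▸ subset_univ s)
  refine ⟨insert U D, insert_subset hUC hDC, hD.insert U, eq_univ_of_forall fun y => ?_⟩
  rw [sUnion_insert]
  by_cases hyU : y ∈ U
  · exact Or.inl hyU
  · exact Or.inr (hcovD (hUs hyU))

end CLPCompactSet

theorem isCLPCompact_setOf_apply_eq {n : ℕ} {X : Fin (n + 1) → Type*}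
    [∀ i, TopologicalSpace (X i)] (i : Fin (n + 1)) (a : X i)
    (h : CLPCompact (∀ j, X (i.succAbove j))) : IsCLPCompact {y : ∀ j, X j | y i = a} := by
  have hrange : {y : ∀ j, X j | y i = a} = range (i.insertNth a) := by
    ext y
    refine ⟨fun hy => ⟨i.removeNth y, ?_⟩, ?_⟩
    · rw [← hy, Fin.insertNth_self_removeNth]
    · rintro ⟨z, rfl⟩
      exact Fin.insertNth_apply_same i a z
  rw [hrange]
  exact h.isCLPCompact_range (continuous_const.finInsertNth i continuous_id)

section Products

variable {F : ℕ → Set (Set NStar)} {n : ℕ}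

abbrev XProd (F : ℕ → Set (Set NStar)) (p : Fin n → ℕ) : Type := ∀ i, XF (F (p i))

/-- `Sᴺ_p`. -/
def lowSet (F : ℕ → Set (Set NStar)) (p : Fin n → ℕ) (N : ℕ) : Set (XProd F p) :=
  {y | ∃ i, ∃ m : ℕ, m < N ∧ y i = Sum.inl m}

/-- `Tᴺ_p`. -/
def highSet (F : ℕ → Set (Set NStar)) (p : Fin n → ℕ) (N : ℕ) : Set (XProd F p) :=
  {y | ∀ i, ∀ m : ℕ, y i = Sum.inl m → N ≤ m}

theorem compl_lowSet (p : Fin n → ℕ) (N : ℕ) : (lowSet F p N)ᶜ = highSet F p N := by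
  ext y
  simp only [lowSet, highSet, mem_compl_iff, mem_ofPred_eq, not_exists, not_and]
  exact forall_congr' fun i => forall_congr' fun m => by rw [imp_not_comm, not_lt]

def FinCofin (F : ℕ → Set (Set NStar)) (p : Fin n → ℕ) : Prop :=
  ∀ U : Set (XProd F p), IsClopen U → ∃ N, U ⊆ lowSet F p N ∨ highSet F p N ⊆ U

theorem discreteTopology_XF_of_eq_empty {F : Set (Set NStar)} (hF : F = ∅) :
    DiscreteTopology (XF F) := by
  rw [discreteTopology_iff_isOpen_singleton]
  rintro (m | ⟨K, hK⟩)
  · exact TopologicalSpace.isOpen_generateFrom_of_mem (Or.inl ⟨m, rfl⟩)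
  · exact absurd hK (hF ▸ notMem_empty K)

theorem FinCofin.nonempty {p : Fin n → ℕ} (h : FinCofin F p) (i : Fin n) :
    (F (p i)).Nonempty := by
  by_contra hF
  have := discreteTopology_XF_of_eq_empty (not_nonempty_iff_eq_empty.mp hF)
  let evens : Set (XProd F p) := (· i) ⁻¹' range fun m => Sum.inl (2 * m)
  obtain ⟨N, hN | hN⟩ := h evens ((isClopen_discrete _).preimage (continuous_apply i))
  · have heven : (fun _ => Sum.inl (2 * N) : XProd F p) ∈ evens := ⟨N, rfl⟩
    obtain ⟨j, m, hm, hjm⟩ := hN heven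
    have := Sum.inl.inj hjm
    omega
  · have hhigh : (fun _ => Sum.inl (2 * N + 1) : XProd F p) ∈ highSet F p N := by
      intro j m hm
      have := Sum.inl.inj hm
      omega
    obtain ⟨m, hm⟩ := hN hhigh
    have := Sum.inl.inj hm
    omega

theorem isCLPCompact_lowSet {p : Fin (n + 1) → ℕ}
    (IH : ∀ q : Fin n → ℕ, CLPCompact (XProd F q)) (N : ℕ) : IsCLPCompact (lowSet F p N) := by
  have hslices : lowSet F p N =
      ⋃ im : Fin (n + 1) × Fin N, {y : XProd F p | y im.1 = Sum.inl (im.2 : ℕ)} := by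
    ext y
    simp [lowSet, Prod.exists, Fin.exists_iff]
  rw [hslices]
  exact isCLPCompact_iUnion fun im =>
    isCLPCompact_setOf_apply_eq im.1 _ (IH (p ∘ im.1.succAbove))

theorem FinCofin.clpCompact {p : Fin (n + 1) → ℕ} (h : FinCofin F p)
    (IH : ∀ q : Fin n → ℕ, CLPCompact (XProd F q)) : CLPCompact (XProd F p) := by
  choose K hK using h.nonempty
  refine clpCompact_of_forall_isCLPCompact_compl (fun i => Sum.inr ⟨K i, hK i⟩)
    fun U hU hxU => ?_
  obtain ⟨N, hN⟩ := h U hU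
  have hT : highSet F p N ⊆ U := hN.resolve_left fun hS => by
    obtain ⟨i, m, -, him⟩ := hS hxU
    exact Sum.inr_ne_inl him
  exact ⟨lowSet F p N, isCLPCompact_lowSet IH N, compl_subset_comm.mp (compl_lowSet p N ▸ hT)⟩

end Products

theorem clp_compact_of_fin_cofin_general (F : ℕ → Set (Set NStar))
    (h : ∀ (n : ℕ) (p : Fin n → ℕ) (U : Set (∀ i : Fin n, XF (F (p i)))), IsClopen U →
      ∃ N : ℕ,
        (∀ y ∈ U, ∃ i, ∃ m : ℕ, m < N ∧ y i = Sum.inl m) ∨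
        (∀ y : ∀ i : Fin n, XF (F (p i)), (∀ i, ∀ m : ℕ, y i = Sum.inl m → N ≤ m) → y ∈ U)) :
    ∀ (n : ℕ) (p : Fin n → ℕ), CLPCompact (∀ i : Fin n, XF (F (p i))) := by
  intro n
  induction n with
  | zero => exact fun p => CLPCompact.of_compactSpace
  | succ n IH => exact fun p => FinCofin.clpCompact (h (n + 1) p) IH

/-- If every clopen subset of every finite product X_p = ∏_{i<n} X(F_{p(i)}) is, for
some N, either contained in Sᴺ_p or contains Tᴺ_p, then every X_p is CLP-compact. -/
theorem clp_compact_of_fin_cofin (F : ℕ → Set (Set NStar))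
    (hne : ∀ i, ∀ K ∈ F i, Set.Nonempty K) (hcl : ∀ i, ∀ K ∈ F i, IsClosed K)
    (hdisj : ∀ i, ∀ K ∈ F i, ∀ L ∈ F i, K ≠ L → Disjoint K L)
    (h : ∀ (n : ℕ) (p : Fin n → ℕ) (U : Set (∀ i : Fin n, XF (F (p i)))), IsClopen U →
      ∃ N : ℕ,
        (∀ y ∈ U, ∃ i, ∃ m : ℕ, m < N ∧ y i = Sum.inl m) ∨
        (∀ y : ∀ i : Fin n, XF (F (p i)), (∀ i, ∀ m : ℕ, y i = Sum.inl m → N ≤ m) → y ∈ U)) :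
    ∀ (n : ℕ) (p : Fin n → ℕ), CLPCompact (∀ i : Fin n, XF (F (p i))) :=
  clp_compact_of_fin_cofin_general F h
end

section
/- Assume that for every diagonal pair (D,E) of subsets of ℕⁿ the separation condition ☕(D,E) holds: there exist K_0,…,K_{n−1} with K_i ∈ F_{p(i)} such that D ∩ (A_0 × ⋯ × A_{n−1}) and E ∩ (A_0 × ⋯ × A_{n−1}) are both non-empty whenever A_i ⊆ ℕ satisfy K_i ⊆ A_i*. Then for every clopen U ⊆ X_p there is N ∈ ω with either U ∩ ℕⁿ ⊆ 𝕊ᴺ_p or 𝕋ᴺ_p ⊆ U ∩ ℕⁿ. -/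
/-- D ⊆ ℕⁿ is diagonal: it is contained in no initial stripe union 𝕊ᴺ, contains
no cofinite box 𝕋ᴺ, and all coordinate projections are injective on D. -/
def Diagonal (n : ℕ) (D : Set (Fin n → ℕ)) : Prop :=
  (∀ N : ℕ, ¬ D ⊆ {x | ∃ i, x i < N}) ∧
  (∀ N : ℕ, ¬ {x : Fin n → ℕ | ∀ i, N ≤ x i} ⊆ D) ∧
  (∀ i : Fin n, Set.InjOn (fun x => x i) D)

/-- Condition ☕(D,E): there are K_i ∈ F_{p(i)} such that D and E meet every box
A_0 × ⋯ × A_{n-1} with K_i ⊆ A_i*. -/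
def Coffee (F : ℕ → Set (Set NStar)) {n : ℕ} (p : Fin n → ℕ)
    (D E : Set (Fin n → ℕ)) : Prop :=
  ∃ K : Fin n → Set NStar, (∀ i, K i ∈ F (p i)) ∧
    ∀ A : Fin n → Set ℕ, (∀ i, K i ⊆ AStar (A i)) →
      (D ∩ {x | ∀ i, x i ∈ A i}).Nonempty ∧ (E ∩ {x | ∀ i, x i ∈ A i}).Nonempty

/-! If neither alternative holds for any `N`, both `U` and its complement meet every box `𝕋ᴺ`,
so each contains a diagonal set: points escaping to infinity fast enough that every coordinate
increases with gaps along the sequence. Condition ☕ for this pair yields `K_i ∈ F_{p(i)}`, and the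
boxes `∏ A_i` with `K_i ⊆ A_i*` are exactly the traces on `ℕⁿ` of the neighbourhoods of the point
`(K_i)_i` of `X_p`. That point is therefore in the closure of both diagonal sets, hence in the
closed set `U` and in the closed set `Uᶜ`. -/

open Filter Topology

namespace XF

def ofNat {G : Set (Set NStar)} (m : ℕ) : XF G := Sum.inl m

def ofMem {G : Set (Set NStar)} (K : G) : XF G := Sum.inr K

theorem subset_aStar_preimage_of_mem_nhds {G : Set (Set NStar)} {K : G} {W : Set (XF G)}
    (hW : W ∈ 𝓝 (ofMem K)) :
    (K : Set NStar) ⊆ AStar (ofNat ⁻¹' W) := by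
  -- `⨆ U ∈ K, U` is the filter of the sets `A` with `K ⊆ A*`
  suffices map ofNat (⨆ U ∈ (K : Set NStar), (U.1 : Filter ℕ)) ≤ 𝓝 (ofMem K) from
    fun U hU => mem_iSup.1 (mem_iSup.1 (this hW) U) hU
  rw [TopologicalSpace.nhds_generateFrom]
  refine le_iInf₂ fun s ⟨hKs, hs⟩ => ?_
  rcases hs with ⟨m, rfl⟩ | ⟨K', A, hK'A, rfl⟩
  · exact absurd (Set.mem_singleton_iff.1 hKs) Sum.inr_ne_inl
  obtain rfl : K = K' := by
    rcases Set.mem_insert_iff.1 hKs with h | ⟨m, -, h⟩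
    · exact Sum.inr_injective h
    · exact absurd h Sum.inl_ne_inr
  exact le_principal_iff.2 <| mem_map.2 <| mem_iSup.2 fun U => mem_iSup.2 fun hU =>
    mem_of_superset (hK'A hU) fun m hm => Or.inr ⟨m, hm, rfl⟩

theorem pi_ofMem_mem_closure_image {ι : Type*} {G : ι → Set (Set NStar)} (K : ∀ i, G i)
    {S : Set (ι → ℕ)}
    (hS : ∀ A : ι → Set ℕ, (∀ i, (K i : Set NStar) ⊆ AStar (A i)) →
      (S ∩ {x | ∀ i, x i ∈ A i}).Nonempty) :
    (fun i => ofMem (K i)) ∈ closure ((fun x i => ofNat (x i)) '' S) := by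
  rw [mem_closure_iff_nhds, nhds_pi]
  intro W hW
  obtain ⟨I, -, t, ht, htW⟩ := mem_pi.1 hW
  obtain ⟨x, hxS, hxt⟩ := hS (fun i => ofNat ⁻¹' t i)
    fun i => subset_aStar_preimage_of_mem_nhds (ht i)
  exact ⟨_, htW fun i _ => hxt i, x, hxS, rfl⟩

end XF

theorem diagonal_range {n : ℕ} (hn : 0 < n) {d : ℕ → Fin n → ℕ}
    (hd : ∀ k i j, d k i + 2 ≤ d (k + 1) j) : Diagonal n (Set.range d) := by
  have hmono : ∀ i, StrictMono fun k => d k i := fun i =>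
    strictMono_nat_of_lt_succ fun k => by have := hd k i i; omega
  set i₀ : Fin n := ⟨0, hn⟩
  refine ⟨fun N hN => ?_, fun N hN => ?_, fun i => ?_⟩
  · obtain ⟨i, hi⟩ := hN ⟨N, rfl⟩
    exact ((hmono i).id_le N).not_gt hi
  · -- the first coordinate of `range d` skips the value `d N i₀ + 1`
    obtain ⟨k, hk⟩ := hN (a := fun _ => d N i₀ + 1) fun _ =>
      Nat.le_succ_of_le ((hmono i₀).id_le N)
    have hk₀ : d k i₀ = d N i₀ + 1 := congrFun hk i₀
    rcases le_or_gt k N with h | h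
    · have := (hmono i₀).monotone h; omega
    · have := (hmono i₀).monotone (show N + 1 ≤ k from h); have := hd N i₀ i₀; omega
  · rintro _ ⟨k, rfl⟩ _ ⟨l, rfl⟩ h
    rw [(hmono i).injective h]

theorem exists_diagonal_subset {n : ℕ} (hn : 0 < n) {T : Set (Fin n → ℕ)}
    (hT : ∀ N, ∃ x ∈ T, ∀ i, N ≤ x i) : ∃ D ⊆ T, Diagonal n D := by
  choose g hgT hg using hT
  let d : ℕ → Fin n → ℕ := fun k => Nat.rec (g 0) (fun _ x => g (Finset.univ.sup x + 2)) k
  refine ⟨Set.range d, Set.range_subset_iff.2 fun k => ?_, diagonal_range hn fun k i j => ?_⟩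
  · cases k <;> apply hgT
  · exact (Nat.add_le_add_right (Finset.le_sup (Finset.mem_univ i)) 2).trans (hg _ j)

theorem clopen_trace_fin_or_cofin_general (F : ℕ → Set (Set NStar))
    {n : ℕ} (p : Fin n → ℕ)
    (hcoffee : ∀ D E : Set (Fin n → ℕ), Diagonal n D → Diagonal n E → Coffee F p D E)
    (U : Set (∀ i : Fin n, XF (F (p i)))) (hU : IsClopen U) :
    ∃ N : ℕ,
      (∀ x : Fin n → ℕ, (fun i => (Sum.inl (x i) : XF (F (p i)))) ∈ U → ∃ i, x i < N) ∨
      (∀ x : Fin n → ℕ, (∀ i, N ≤ x i) →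
        (fun i => (Sum.inl (x i) : XF (F (p i)))) ∈ U) := by
  by_contra! hcon
  rcases n.eq_zero_or_pos with rfl | hn
  · obtain ⟨⟨x, hx, -⟩, y, -, hy⟩ := hcon 0
    exact hy (Subsingleton.elim x y ▸ hx)
  obtain ⟨D, hDU, hD⟩ := exists_diagonal_subset hn fun N => (hcon N).1
  obtain ⟨E, hEU, hE⟩ := exists_diagonal_subset hn fun N =>
    let ⟨x, hx, hxU⟩ := (hcon N).2; ⟨x, hxU, hx⟩
  obtain ⟨K, hK, hbox⟩ := hcoffee D E hD hE
  have hKU := hU.isClosed.closure_subset_iff.2 (Set.image_subset_iff.2 hDU)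
    (XF.pi_ofMem_mem_closure_image (fun i => ⟨K i, hK i⟩) fun A hA => (hbox A hA).1)
  have hKUc := hU.isOpen.isClosed_compl.closure_subset_iff.2 (Set.image_subset_iff.2 hEU)
    (XF.pi_ofMem_mem_closure_image (fun i => ⟨K i, hK i⟩) fun A hA => (hbox A hA).2)
  exact hKUc hKU

/-- If ☕(D,E) holds for every p-diagonal pair, then every clopen U ⊆ X_p has, for
some N, trace on ℕⁿ either contained in 𝕊ᴺ_p or containing 𝕋ᴺ_p. -/
theorem clopen_trace_fin_or_cofin (F : ℕ → Set (Set NStar))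
    (hne : ∀ i, ∀ K ∈ F i, Set.Nonempty K) (hcl : ∀ i, ∀ K ∈ F i, IsClosed K)
    (hdisj : ∀ i, ∀ K ∈ F i, ∀ L ∈ F i, K ≠ L → Disjoint K L)
    {n : ℕ} (p : Fin n → ℕ)
    (hcoffee : ∀ D E : Set (Fin n → ℕ), Diagonal n D → Diagonal n E → Coffee F p D E)
    (U : Set (∀ i : Fin n, XF (F (p i)))) (hU : IsClopen U) :
    ∃ N : ℕ,
      (∀ x : Fin n → ℕ, (fun i => (Sum.inl (x i) : XF (F (p i)))) ∈ U → ∃ i, x i < N) ∨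
      (∀ x : Fin n → ℕ, (∀ i, N ≤ x i) →
        (fun i => (Sum.inl (x i) : XF (F (p i)))) ∈ U) :=
  clopen_trace_fin_or_cofin_general F p hcoffee U hU
end

section
/- There exists a family {F_i : i ∈ ω} such that: each F_i consists of pairwise disjoint finite subsets of ℕ*; condition ☕(D,E) holds for every diagonal pair (D,E); and condition ♺ holds (no infinite choice x_i ∈ F_i over an infinite index set is linked). -/
/-- Condition ♺: no infinite selection x_i ∈ F_i is linked. -/
def Bicycle (F : ℕ → Set (Set NStar)) : Prop :=
  ∀ I : Set ℕ, I.Infinite → ∀ x : ℕ → Set NStar, (∀ i ∈ I, x i ∈ F i) →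
    ∃ i ∈ I, ∃ j ∈ I, i ≠ j ∧ Disjoint (x i) (x j)

open Set Filter Cardinal Function

namespace Ultrafilter

variable {α β : Type*}

lemma eq_of_map_eq_of_injOn {f : α → β} {s : Set α} (hf : InjOn f s) {U V : Ultrafilter α}
    (hU : s ∈ U) (hV : s ∈ V) (h : U.map f = V.map f) : U = V :=
  coe_injective <| (map_eq_map_iff_of_injOn hU hV hf).1 (congrArg ((↑) : _ → Filter β) h)

lemma map_le_cofinite_of_injOn {f : α → β} {s : Set α} (hf : InjOn f s) {U : Ultrafilter α}
    (hs : s ∈ U) (hU : (U : Filter α) ≤ cofinite) : (U.map f : Filter β) ≤ cofinite := by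
  refine le_cofinite_iff_compl_singleton_mem.2 fun y => ?_
  have hfin : (s ∩ f ⁻¹' {y}).Finite :=
    Subsingleton.finite fun a ha b hb => hf ha.1 hb.1 (ha.2.trans hb.2.symm)
  change f ⁻¹' {y}ᶜ ∈ U
  filter_upwards [hs, hU hfin.compl_mem_cofinite] with x hxs hx hxy
  exact hx ⟨hxs, hxy⟩

end Ultrafilter

section IndependentFamily

variable {β J : Type*}

def patternCell (A : J → Set β) (f : Set J) (s : Finset J) : Set β :=
  {b | ∀ j ∈ s, b ∈ A j ↔ j ∈ f}

def IsIndependentFamily (A : J → Set β) : Prop :=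
  ∀ (f : Set J) (s : Finset J), (patternCell A f s).Infinite

lemma IsIndependentFamily.exists_injective_ultrafilter {A : J → Set β}
    (hA : IsIndependentFamily A) :
    ∃ U : Set J → Ultrafilter β, Injective U ∧ ∀ f, (U f : Filter β) ≤ cofinite := by
  classical
  have hne : ∀ f, (⨅ s : Finset J, 𝓟 (patternCell A f s) ⊓ cofinite).NeBot := fun f => by
    refine iInf_neBot_of_directed' (fun s t => ⟨s ∪ t, ?_, ?_⟩) fun s => ?_
    · exact inf_le_inf_right _ <| principal_mono.2 fun b hb j hj =>
        hb j (Finset.mem_union_left t hj)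
    · exact inf_le_inf_right _ <| principal_mono.2 fun b hb j hj =>
        hb j (Finset.mem_union_right s hj)
    · rw [inf_comm]
      exact cofinite_inf_principal_neBot_iff.2 (hA f s)
  choose U hU using fun f => @Ultrafilter.exists_le _ _ (hne f)
  have hcell : ∀ f s, patternCell A f s ∈ U f := fun f s =>
    (hU f).trans ((iInf_le _ s).trans inf_le_left) (mem_principal_self _)
  refine ⟨U, fun f g hfg => ?_, fun f => (hU f).trans ((iInf_le _ ∅).trans inf_le_right)⟩
  ext j
  obtain ⟨b, hbf, hbg⟩ := (U f).nonempty_of_mem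
    (inter_mem (hcell f {j}) (hfg ▸ hcell g {j} : patternCell A g {j} ∈ U f))
  exact (hbf j (Finset.mem_singleton_self j)).symm.trans (hbg j (Finset.mem_singleton_self j))

end IndependentFamily

open scoped Classical in
/-- Hausdorff's independent family of size `𝔠` on a countable set. -/
def traceFamily (X : Set ℕ) : Set (Finset ℕ × Finset (Finset ℕ)) :=
  {b | b.1.filter (· ∈ X) ∈ b.2}

open scoped Classical in
lemma exists_finset_injOn_filter_mem (s : Finset (Set ℕ)) :
    ∃ F₀ : Finset ℕ, ∀ F : Finset ℕ, F₀ ⊆ F →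
      InjOn (fun X => F.filter (· ∈ X)) (s : Set (Set ℕ)) := by
  have : ∀ X Y : Set ℕ, ∃ n, X ≠ Y → ¬(n ∈ X ↔ n ∈ Y) := fun X Y => by
    by_cases h : X = Y
    · exact ⟨0, fun hne => absurd h hne⟩
    · obtain ⟨n, hn⟩ := not_forall.1 (mt Set.ext h)
      exact ⟨n, fun _ => hn⟩
  choose sep hsep using this
  refine ⟨(s ×ˢ s).image fun XY => sep XY.1 XY.2, fun F hF X hX Y hY hXY => ?_⟩
  by_contra hne
  have hmem : sep X Y ∈ F := hF (Finset.mem_image.2 ⟨(X, Y), Finset.mem_product.2 ⟨hX, hY⟩, rfl⟩)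
  have := congrArg (sep X Y ∈ ·) hXY
  simp only [Finset.mem_filter, hmem, true_and, eq_iff_iff] at this
  exact hsep X Y hne this

lemma isIndependentFamily_traceFamily : IsIndependentFamily traceFamily := by
  classical
  intro f s
  obtain ⟨F₀, hF₀⟩ := exists_finset_injOn_filter_mem s
  let b : ℕ → Finset ℕ × Finset (Finset ℕ) := fun N =>
    (insert N F₀, (s.filter (· ∈ f)).image fun X => (insert N F₀).filter (· ∈ X))
  have hb : ∀ N, b N ∈ patternCell traceFamily f s := by
    intro N X hX
    change (insert N F₀).filter (· ∈ X) ∈ (s.filter (· ∈ f)).image _ ↔ X ∈ f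
    simp only [Finset.mem_image, Finset.mem_filter]
    constructor
    · rintro ⟨Y, ⟨hY, hYf⟩, hYX⟩
      rwa [← hF₀ _ (Finset.subset_insert _ _) hY hX hYX]
    · exact fun hXf => ⟨X, ⟨hX, hXf⟩, rfl⟩
  have hunbdd : ¬BddAbove ((fun b => b.1.sup id) '' patternCell traceFamily f s) :=
    not_bddAbove_iff.2 fun N => ⟨_, mem_image_of_mem _ (hb (N + 1)),
      (Nat.lt_succ_self N).trans_le (Finset.le_sup (f := id) (Finset.mem_insert_self _ _))⟩
  exact (infinite_of_not_bddAbove hunbdd).of_image _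

lemma continuum_lt_mk_freeUltrafilter_mem {β : Type} [Countable β] {D : Set β}
    (hD : D.Infinite) :
    𝔠 < #{W : Ultrafilter β // D ∈ W ∧ (W : Filter β) ≤ cofinite} := by
  have := hD.to_subtype
  obtain ⟨e⟩ : Nonempty ((Finset ℕ × Finset (Finset ℕ)) ≃ D) := nonempty_equiv_of_countable
  obtain ⟨U, hUinj, hUfree⟩ := isIndependentFamily_traceFamily.exists_injective_ultrafilter
  have hg : Injective (Subtype.val ∘ e) := Subtype.val_injective.comp e.injective
  let Φ : Set (Set ℕ) → {W : Ultrafilter β // D ∈ W ∧ (W : Filter β) ≤ cofinite} := fun f =>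
    ⟨(U f).map (Subtype.val ∘ e), Ultrafilter.mem_map.2 (univ_mem' fun x => (e x).2),
      (map_mono (hUfree f)).trans hg.tendsto_cofinite⟩
  have hΦ : Injective Φ := fun f f' h => hUinj <|
    Ultrafilter.eq_of_map_eq_of_injOn hg.injOn univ_mem univ_mem (congrArg Subtype.val h)
  calc 𝔠 < 2 ^ 𝔠 := cantor 𝔠
    _ = #(Set (Set ℕ)) := by rw [mk_set, mk_set_nat]
    _ ≤ _ := mk_le_of_injective hΦ

lemma exists_freeUltrafilter_map_notMem {β γ ι : Type} [Countable β] [Countable ι]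
    {D : Set β} (hD : D.Infinite) {f : ι → β → γ} (hf : ∀ i, InjOn (f i) D)
    {Used : Set (Ultrafilter γ)} (hUsed : #Used ≤ 𝔠) :
    ∃ W : Ultrafilter β, D ∈ W ∧ (W : Filter β) ≤ cofinite ∧ ∀ i, W.map (f i) ∉ Used := by
  let Good := {W : Ultrafilter β // D ∈ W ∧ (W : Filter β) ≤ cofinite}
  let Bad : ι → Set Good := fun i => (fun W : Good => W.1.map (f i)) ⁻¹' Used
  have hBad : ∀ i, #(Bad i) ≤ 𝔠 := fun i =>
    (mk_preimage_of_injective _ _ fun W W' h =>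
      Subtype.ext (Ultrafilter.eq_of_map_eq_of_injOn (hf i) W.2.1 W'.2.1 h)).trans hUsed
  have hBadUnion : #(⋃ i, Bad i) ≤ 𝔠 :=
    (mk_iUnion_le Bad).trans <|
      (mul_le_mul' (mk_le_aleph0.trans aleph0_le_continuum) (ciSup_le' hBad)).trans
        (mul_eq_self aleph0_le_continuum).le
  have hne : (⋃ i, Bad i) ≠ Set.univ := fun h =>
    (continuum_lt_mk_freeUltrafilter_mem hD).not_ge (by rwa [← mk_univ, ← h])
  obtain ⟨W, hW⟩ := (ne_univ_iff_exists_notMem _).1 hne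
  exact ⟨W.1, W.2.1, W.2.2, fun i hi => hW (mem_iUnion.2 ⟨i, hi⟩)⟩

lemma Diagonal.pos {n : ℕ} {D : Set (Fin n → ℕ)} (hD : Diagonal n D) : 0 < n := by
  refine Nat.pos_of_ne_zero fun hn => ?_
  subst hn
  obtain ⟨x, hx, -⟩ := not_subset.1 (hD.1 0)
  exact hD.2.1 0 fun y _ => Subsingleton.elim x y ▸ hx

lemma Diagonal.infinite {n : ℕ} {D : Set (Fin n → ℕ)} (hD : Diagonal n D) : D.Infinite := by
  let i₀ : Fin n := ⟨0, hD.pos⟩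
  have hunbdd : ¬BddAbove ((fun x => x i₀) '' D) := by
    rintro ⟨N, hN⟩
    obtain ⟨x, hx, hxN⟩ := not_subset.1 (hD.1 (N + 1))
    exact hxN ⟨i₀, Nat.lt_succ_of_le (hN (mem_image_of_mem _ hx))⟩
  exact (infinite_of_not_bddAbove hunbdd).of_image _

section CoordImages

variable {n : ℕ}

def coordImages (W : Ultrafilter (Fin n → ℕ)) : Set NStar :=
  Subtype.val ⁻¹' range fun i => W.map fun x => x i

lemma finite_coordImages (W : Ultrafilter (Fin n → ℕ)) : (coordImages W).Finite :=
  (finite_range _).preimage Subtype.val_injective.injOn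

variable {D : Set (Fin n → ℕ)} {W : Ultrafilter (Fin n → ℕ)}

lemma exists_mem_coordImages (hD : Diagonal n D) (hWD : D ∈ W)
    (hW : (W : Filter (Fin n → ℕ)) ≤ cofinite) (i : Fin n) :
    ∃ V ∈ coordImages W, V.1 = W.map fun x => x i :=
  ⟨⟨_, Ultrafilter.map_le_cofinite_of_injOn (hD.2.2 i) hWD hW⟩, ⟨i, rfl⟩, rfl⟩

/-- `☕(D, ·)` with the witness `K_i = S` for every `i`. -/
def BoxesMeet (S : Set NStar) (D : Set (Fin n → ℕ)) : Prop :=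
  ∀ A : Fin n → Set ℕ, (∀ i, S ⊆ AStar (A i)) → (D ∩ {x | ∀ i, x i ∈ A i}).Nonempty

lemma boxesMeet_of_coordImages_subset (hD : Diagonal n D) (hWD : D ∈ W)
    (hW : (W : Filter (Fin n → ℕ)) ≤ cofinite) {S : Set NStar} (hS : coordImages W ⊆ S) :
    BoxesMeet S D := by
  intro A hA
  have hmem : ∀ i, (fun x : Fin n → ℕ => x i) ⁻¹' A i ∈ W := fun i => by
    obtain ⟨V, hV, hVW⟩ := exists_mem_coordImages hD hWD hW i
    have : A i ∈ V.1 := hA i (hS hV)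
    rwa [hVW] at this
  obtain ⟨x, hxD, hx⟩ := W.nonempty_of_mem (inter_mem hWD (iInter_mem.2 hmem))
  exact ⟨x, hxD, mem_iInter.1 hx⟩

lemma exists_freeUltrafilter_disjoint_coordImages (hD : Diagonal n D) {Used : Set NStar}
    (hUsed : #Used ≤ 𝔠) :
    ∃ W : Ultrafilter (Fin n → ℕ), D ∈ W ∧ (W : Filter (Fin n → ℕ)) ≤ cofinite ∧
      Disjoint (coordImages W) Used := by
  obtain ⟨W, hWD, hW, hfresh⟩ := exists_freeUltrafilter_map_notMem hD.infinite hD.2.2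
    (Used := Subtype.val '' Used) (mk_image_le.trans hUsed)
  refine ⟨W, hWD, hW, disjoint_left.2 ?_⟩
  rintro V ⟨i, hi⟩ hV
  exact hfresh i ⟨V, hV, hi.symm⟩

lemma exists_finite_disjoint_boxesMeet {E : Set (Fin n → ℕ)} (hD : Diagonal n D)
    (hE : Diagonal n E) {Used : Set NStar} (hUsed : #Used ≤ 𝔠) :
    ∃ S : Set NStar, S.Finite ∧ Disjoint S Used ∧
      S.Nonempty ∧ BoxesMeet S D ∧ BoxesMeet S E := by
  obtain ⟨W, hWD, hW, hWUsed⟩ := exists_freeUltrafilter_disjoint_coordImages hD hUsed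
  obtain ⟨W', hW'E, hW', hW'Used⟩ := exists_freeUltrafilter_disjoint_coordImages hE hUsed
  obtain ⟨V, hV, -⟩ := exists_mem_coordImages hD hWD hW ⟨0, hD.pos⟩
  exact ⟨coordImages W ∪ coordImages W', (finite_coordImages W).union (finite_coordImages W'),
    disjoint_union_left.2 ⟨hWUsed, hW'Used⟩, ⟨V, Or.inl hV⟩,
    boxesMeet_of_coordImages_subset hD hWD hW subset_union_left,
    boxesMeet_of_coordImages_subset hE hW'E hW' subset_union_right⟩

end CoordImages

universe u

theorem exists_pairwise_disjoint_finite {ι α : Type u} {κ : Cardinal.{u}} (hκ : ℵ₀ ≤ κ)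
    (hι : #ι ≤ κ) (P : ι → Set α → Prop)
    (h : ∀ i (Used : Set α), #Used ≤ κ → ∃ S : Set α, S.Finite ∧ Disjoint S Used ∧ P i S) :
    ∃ S : ι → Set α, (∀ i, (S i).Finite ∧ P i (S i)) ∧ Pairwise (Disjoint on S) := by
  have h' : ∀ i (Used : Set α), ∃ S : Set α, S.Finite ∧ (#Used ≤ κ → Disjoint S Used ∧ P i S) := by
    intro i Used
    by_cases hUsed : #Used ≤ κ
    · obtain ⟨S, hfin, hdisj, hP⟩ := h i Used hUsed
      exact ⟨S, hfin, fun _ => ⟨hdisj, hP⟩⟩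
    · exact ⟨∅, finite_empty, fun h => absurd h hUsed⟩
  choose pick hpick_finite hpick using h'
  let S : ι → Set α := WellOrderingRel.isWellOrder.wf.fix fun i S =>
    pick i (⋃ j, ⋃ h : WellOrderingRel j i, S j h)
  have hS : ∀ i, S i = pick i (⋃ j, ⋃ _ : WellOrderingRel j i, S j) := fun i =>
    WellFounded.fix_eq _ _ _
  have hfin : ∀ i, (S i).Finite := fun i => hS i ▸ hpick_finite _ _
  have hearlier : ∀ i, #(⋃ j, ⋃ _ : WellOrderingRel j i, S j : Set α) ≤ κ := fun i =>
    (mk_le_mk_of_subset (iUnion₂_subset fun j _ => subset_iUnion S j)).trans <|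
      (mk_iUnion_le S).trans <|
        (mul_le_mul' hι (ciSup_le' fun j => (hfin j).lt_aleph0.le.trans hκ)).trans
          (mul_eq_self hκ).le
  have hspec : ∀ i, Disjoint (S i) (⋃ j, ⋃ _ : WellOrderingRel j i, S j) ∧ P i (S i) :=
    fun i => by rw [hS i]; exact hpick _ _ (hearlier i)
  have hlt : ∀ {i j}, WellOrderingRel i j → Disjoint (S i) (S j) := fun {i j} hij =>
    ((hspec j).1.mono_right <|
      subset_iUnion₂ (s := fun k (_ : WellOrderingRel k j) => S k) i hij).symm
  refine ⟨S, fun i => ⟨hfin i, (hspec i).2⟩, fun i j hij => ?_⟩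
  rcases trichotomous_of WellOrderingRel i j with h | h | h
  · exact hlt h
  · exact absurd h hij
  · exact (hlt h).symm

structure Requirement where
  n : ℕ
  p : Fin n → ℕ
  D : Set (Fin n → ℕ)
  E : Set (Fin n → ℕ)
  diagonal_D : Diagonal n D
  diagonal_E : Diagonal n E

lemma Requirement.mk_le_continuum : #Requirement ≤ 𝔠 := by
  have hinj : Injective fun r : Requirement =>
      (⟨r.n, r.p, r.D, r.E⟩ : Σ n : ℕ, (Fin n → ℕ) × Set (Fin n → ℕ) × Set (Fin n → ℕ)) := by
    rintro ⟨n, p, D, E⟩ ⟨n', p', D', E'⟩ h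
    obtain ⟨rfl, h⟩ := Sigma.mk.inj h
    obtain ⟨rfl, rfl, rfl⟩ := Prod.ext_iff.1 (eq_of_heq h)
    rfl
  refine (mk_le_of_injective hinj).trans ?_
  rw [mk_sigma]
  refine (sum_le_sum _ (fun _ => 𝔠) fun n => ?_).trans ?_
  · have hfun : #(Fin n → ℕ) ≤ 𝔠 := mk_le_aleph0.trans aleph0_le_continuum
    have hset : #(Set (Fin n → ℕ)) ≤ 𝔠 := by
      rw [mk_set, ← two_power_aleph0]
      exact power_le_power_left two_ne_zero mk_le_aleph0
    simp only [mk_prod, lift_id]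
    exact (mul_le_mul' hfun (mul_le_mul' hset hset)).trans (by simp)
  · rw [sum_const, mk_nat, lift_aleph0, lift_id, aleph0_mul_continuum]

def familyOf (S : Requirement → Set NStar) (m : ℕ) : Set (Set NStar) :=
  S '' {r | m ∈ range r.p}

lemma bicycle_familyOf {S : Requirement → Set NStar} (hS : Pairwise (Disjoint on S)) :
    Bicycle (familyOf S) := by
  intro I hI x hx
  choose r hr hxr using hx
  by_contra! hlinked
  obtain ⟨i₀, hi₀⟩ := hI.nonempty
  have hconst : ∀ j (hj : j ∈ I), r j hj = r i₀ hi₀ := fun j hj => by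
    by_contra hne
    have hji : j ≠ i₀ := by rintro rfl; exact hne rfl
    exact hlinked j hj i₀ hi₀ hji (hxr j hj ▸ hxr i₀ hi₀ ▸ hS hne)
  exact hI ((finite_range (r i₀ hi₀).p).subset fun j hj => hconst j hj ▸ hr j hj)

/-- There is a family {F_i : i ∈ ω} of families of pairwise disjoint non-empty finite
subsets of ℕ* such that ☕(D,E) holds for every diagonal pair and ♺ holds. -/
theorem exists_family : ∃ F : ℕ → Set (Set NStar),
    (∀ i, ∀ K ∈ F i, Set.Finite K) ∧
    (∀ i, ∀ K ∈ F i, Set.Nonempty K) ∧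
    (∀ i, ∀ K ∈ F i, ∀ L ∈ F i, K ≠ L → Disjoint K L) ∧
    (∀ (n : ℕ) (p : Fin n → ℕ) (D E : Set (Fin n → ℕ)),
      Diagonal n D → Diagonal n E → Coffee F p D E) ∧
    Bicycle F := by
  obtain ⟨S, hS, hdisj⟩ := exists_pairwise_disjoint_finite aleph0_le_continuum
    Requirement.mk_le_continuum (fun r S => S.Nonempty ∧ BoxesMeet S r.D ∧ BoxesMeet S r.E)
    fun r _ hUsed => exists_finite_disjoint_boxesMeet r.diagonal_D r.diagonal_E hUsed
  refine ⟨familyOf S, ?_, ?_, ?_, fun n p D E hD hE => ?_, bicycle_familyOf hdisj⟩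
  · rintro m _ ⟨r, -, rfl⟩
    exact (hS r).1
  · rintro m _ ⟨r, -, rfl⟩
    exact (hS r).2.1
  · rintro m _ ⟨r, -, rfl⟩ _ ⟨r', -, rfl⟩ hne
    exact hdisj fun h => hne (h ▸ rfl)
  · let r : Requirement := ⟨n, p, D, E, hD, hE⟩
    exact ⟨fun _ => S r, fun i => ⟨r, ⟨i, rfl⟩, rfl⟩,
      fun A hA => ⟨(hS r).2.2.1 A hA, (hS r).2.2.2 A hA⟩⟩
end

section
/- With X = {0} ⊕ X_0 ⊕ X_1 ⊕ ⋯ as above, if all finite products ∏_{i<n} X_{p(i)} (p : n → ω) are CLP-compact, then Xⁿ is CLP-compact for every n ∈ ω. -/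
/-- The one-point convergent sum X = {0} ⊕ X₀ ⊕ X₁ ⊕ ⋯ ; none plays the role of 0. -/
def SumSpace (X : ℕ → Type*) : Type _ := Option (Σ i, X i)

/-- The coarsest topology making every open subset of every Xᵢ open, and every tail
{0} ∪ ⋃_{j≥i} Xⱼ open. -/
instance (X : ℕ → Type*) [∀ i, TopologicalSpace (X i)] : TopologicalSpace (SumSpace X) :=
  TopologicalSpace.generateFrom
    ({S | ∃ (i : ℕ) (U : Set (X i)), IsOpen U ∧
        S = (fun x : X i => (some ⟨i, x⟩ : SumSpace X)) '' U} ∪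
     {S | ∃ i : ℕ, S = insert (none : SumSpace X)
        {y : SumSpace X | ∃ (j : ℕ) (x : X j), i ≤ j ∧ y = some ⟨j, x⟩}})

/-!
Induction on `n`, proving more generally that `Xⁿ × ∏ₖ X_{p k}` is CLP-compact, so that the
columns `X_i × R` met in the inductive step are again of this form. The step is: for `X × R`
with `R` CLP-compact and every `X_i × R` CLP-compact, finitely many members of a
clopen cover already cover `{0} × R`; their union is a clopen neighbourhood of `{0} × R`, hence
contains `(⋃_{j ≥ N} X_j) × R` for some `N`, and the finitely many remaining columns
`X_j × R`, `j < N`, are covered by finitely many further members.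
-/

open Set

namespace CLPCompact

variable {A B : Type*} [TopologicalSpace A] [TopologicalSpace B]

lemma exists_finite_subcover_range (hA : CLPCompact A) {f : A → B} (hf : Continuous f)
    {C : Set (Set B)} (hC : ∀ U ∈ C, IsClopen U) (hcov : range f ⊆ ⋃₀ C) :
    ∃ D ⊆ C, D.Finite ∧ range f ⊆ ⋃₀ D := by
  have hcov' : ⋃₀ (preimage f '' C) = univ := by
    rwa [sUnion_image, ← preimage_iUnion₂, preimage_eq_univ_iff, ← sUnion_eq_biUnion]
  obtain ⟨D, hDC, hDfin, hD⟩ := exists_subset_image_finite_and.1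
    (hA _ (by rintro _ ⟨U, hU, rfl⟩; exact (hC U hU).preimage hf) hcov')
  refine ⟨D, hDC, hDfin, ?_⟩
  rwa [sUnion_image, ← preimage_iUnion₂, preimage_eq_univ_iff, ← sUnion_eq_biUnion] at hD

lemma of_surjective (hA : CLPCompact A) {f : A → B} (hf : Continuous f)
    (hsurj : Function.Surjective f) : CLPCompact B := by
  intro C hC hcov
  obtain ⟨D, hDC, hDfin, hD⟩ :=
    hA.exists_finite_subcover_range hf hC (hcov ▸ subset_univ _)
  exact ⟨D, hDC, hDfin, univ_subset_iff.1 (hsurj.range_eq ▸ hD)⟩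

lemma finite_nonempty_of_locallyFinite (hA : CLPCompact A) {ι : Type*} {C : ι → Set A}
    (hlf : LocallyFinite C) (hC : ∀ i, IsClopen (C i)) : {i | (C i).Nonempty}.Finite := by
  let V : Finset ι → Set A := fun s => (⋃ i : {i // i ∉ s}, C i)ᶜ
  have hV : ∀ s, IsClopen (V s) := fun s => IsClopen.compl
    ⟨(hlf.comp_injective Subtype.val_injective).isClosed_iUnion fun i => (hC i).isClosed,
      isOpen_iUnion fun i => (hC i).isOpen⟩
  have hcov : ⋃₀ (V '' univ) = univ := by
    refine eq_univ_of_forall fun z => ?_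
    obtain ⟨t, ht, htfin⟩ := hlf z
    refine ⟨V htfin.toFinset, mem_image_of_mem V (mem_univ _), ?_⟩
    simp only [V, mem_compl_iff, mem_iUnion, not_exists]
    exact fun ⟨i, hi⟩ hzi => hi (htfin.mem_toFinset.2 ⟨z, hzi, mem_of_mem_nhds ht⟩)
  obtain ⟨S, -, hSfin, hS⟩ := exists_subset_image_finite_and.1
    (hA _ (by rintro _ ⟨s, -, rfl⟩; exact hV s) hcov)
  refine (hSfin.biUnion fun s _ => s.finite_toSet).subset ?_
  rintro i ⟨z, hzi⟩
  obtain ⟨_, ⟨s, hs, rfl⟩, hzs⟩ := hS ▸ mem_univ z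
  by_contra hi
  exact hzs (mem_iUnion.2 ⟨⟨i, fun h => hi (mem_biUnion hs h)⟩, hzi⟩)

end CLPCompact

namespace SumSpace

variable {X : ℕ → Type*}

def incl (i : ℕ) (x : X i) : SumSpace X := some ⟨i, x⟩

lemma incl_injective (i : ℕ) : Function.Injective (incl (X := X) i) :=
  fun _ _ h => sigma_mk_injective (Option.some.inj h)

variable [∀ i, TopologicalSpace (X i)]

lemma continuous_incl (i : ℕ) : Continuous (incl (X := X) i) := by
  rw [continuous_generateFrom_iff]
  rintro s (⟨j, U, hU, rfl⟩ | ⟨M, rfl⟩)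
  · by_cases hij : i = j
    · subst hij
      change IsOpen (incl i ⁻¹' (incl i '' U))
      rwa [preimage_image_eq U (incl_injective i)]
    · convert isOpen_empty
      refine eq_empty_of_forall_notMem fun x ⟨u, _, hu⟩ => hij ?_
      exact (congrArg Sigma.fst (Option.some.inj hu)).symm
  · by_cases hM : M ≤ i
    · convert isOpen_univ
      exact eq_univ_of_forall fun x => Or.inr ⟨i, x, hM, rfl⟩
    · convert isOpen_empty
      refine eq_empty_of_forall_notMem fun x hx => hM ?_
      obtain h | ⟨j, y, hj, h⟩ := hx
      · cases h
      · obtain ⟨rfl, -⟩ := Sigma.mk.inj_iff.1 (Option.some.inj h)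
        exact hj

lemma exists_forall_incl_mem_of_isOpen {W : Set (SumSpace X)} (hW : IsOpen W) (h0 : none ∈ W) :
    ∃ M, ∀ j ≥ M, ∀ x : X j, incl j x ∈ W := by
  have hW' : TopologicalSpace.GenerateOpen _ W := hW
  clear hW
  induction hW' with
  | basic S hS =>
    rcases hS with ⟨i, U, hU, rfl⟩ | ⟨M, rfl⟩
    · obtain ⟨_, -, h⟩ := h0
      cases h
    · exact ⟨M, fun j hj x => Or.inr ⟨j, x, hj, rfl⟩⟩
  | univ => exact ⟨0, fun _ _ _ => trivial⟩
  | inter S T _ _ ihS ihT =>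
    obtain ⟨M₁, hM₁⟩ := ihS h0.1
    obtain ⟨M₂, hM₂⟩ := ihT h0.2
    exact ⟨max M₁ M₂, fun j hj x =>
      ⟨hM₁ j (le_of_max_le_left hj) x, hM₂ j (le_of_max_le_right hj) x⟩⟩
  | sUnion 𝒮 _ ih =>
    obtain ⟨S, hS, h0S⟩ := h0
    obtain ⟨M, hM⟩ := ih S hS h0S
    exact ⟨M, fun j hj x => ⟨S, hS, hM j hj x⟩⟩

variable {R : Type*} [TopologicalSpace R]

/-- A tube lemma: otherwise the points of `Gᶜ` over ever later summands cut out a locally finite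
sequence of nonempty clopen slices of `R`. -/
lemma exists_forall_incl_prod_mem_of_isClopen (hR : CLPCompact R) {G : Set (SumSpace X × R)}
    (hG : IsClopen G) (h0 : ∀ z, (none, z) ∈ G) :
    ∃ N, ∀ j ≥ N, ∀ (x : X j) (z : R), (incl j x, z) ∈ G := by
  by_contra! hbad
  choose j hj x z hz using hbad
  let C : ℕ → Set R := fun N => {w | (incl (j N) (x N), w) ∉ G}
  have hlf : LocallyFinite C := by
    intro w
    obtain ⟨u, v, hu, hv, hnu, hwv, huv⟩ := isOpen_prod_iff.1 hG.isOpen none w (h0 w)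
    obtain ⟨M, hM⟩ := exists_forall_incl_mem_of_isOpen hu hnu
    refine ⟨v, hv.mem_nhds hwv, (finite_lt_nat M).subset fun N ⟨w', hw'C, hw'v⟩ => ?_⟩
    exact lt_of_not_ge fun hMN => hw'C (huv ⟨hM _ (hMN.trans (hj N)) _, hw'v⟩)
  have hC : ∀ N, IsClopen (C N) := fun N =>
    hG.compl.preimage (((continuous_incl _).comp continuous_const).prodMk continuous_id)
  exact infinite_univ ((hR.finite_nonempty_of_locallyFinite hlf hC).subset
    fun N _ => ⟨z N, hz N⟩)

lemma clpCompact_prod (hR : CLPCompact R) (hcol : ∀ i, CLPCompact (X i × R)) :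
    CLPCompact (SumSpace X × R) := by
  intro C hC hcov
  obtain ⟨D₀, hD₀C, hD₀fin, hD₀⟩ := hR.exists_finite_subcover_range
    (f := fun z : R => ((none, z) : SumSpace X × R)) (by fun_prop) hC (hcov ▸ subset_univ _)
  obtain ⟨N, hN⟩ := exists_forall_incl_prod_mem_of_isClopen hR
    (hD₀fin.isClopen_biUnion fun U hU => hC U (hD₀C hU)) fun z => by
      rw [← sUnion_eq_biUnion]; exact hD₀ (mem_range_self z)
  choose D hDC hDfin hD using fun i => (hcol i).exists_finite_subcover_range
    (f := fun p : X i × R => (incl i p.1, p.2))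
    (((continuous_incl i).comp continuous_fst).prodMk continuous_snd) hC (hcov ▸ subset_univ _)
  refine ⟨D₀ ∪ ⋃ i < N, D i, union_subset hD₀C (iUnion₂_subset fun i _ => hDC i),
    hD₀fin.union ((finite_lt_nat N).biUnion fun i _ => hDfin i), ?_⟩
  refine eq_univ_of_forall ?_
  rintro ⟨_ | ⟨j, x⟩, z⟩
  · obtain ⟨U, hU, hzU⟩ := hD₀ (mem_range_self z)
    exact ⟨U, Or.inl hU, hzU⟩
  · by_cases hj : N ≤ j
    · obtain ⟨U, hU, hxU⟩ := mem_iUnion₂.1 (hN j hj x z)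
      exact ⟨U, Or.inl hU, hxU⟩
    · obtain ⟨U, hU, hxU⟩ := hD j (mem_range_self (x, z))
      exact ⟨U, Or.inr (mem_iUnion₂.2 ⟨j, not_le.1 hj, hU⟩), hxU⟩

end SumSpace

theorem clpCompact_pi_sumSpace_prod {X : ℕ → Type*} [∀ i, TopologicalSpace (X i)]
    (h : ∀ (m : ℕ) (p : Fin m → ℕ), CLPCompact (∀ k : Fin m, X (p k))) (t : ℕ) :
    ∀ (m : ℕ) (p : Fin m → ℕ), CLPCompact ((Fin t → SumSpace X) × ∀ k : Fin m, X (p k)) := by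
  induction t with
  | zero =>
    intro m p
    let e := (Homeomorph.uniqueProd (Fin 0 → SumSpace X) (∀ k : Fin m, X (p k))).symm
    exact (h m p).of_surjective e.continuous e.surjective
  | succ t ih =>
    intro m p
    have hcol (i : ℕ) : CLPCompact (X i × (Fin t → SumSpace X) × ∀ k : Fin m, X (p k)) :=
      (ih (m + 1) (Fin.cons i p)).of_surjective (f := fun w => (w.2 0, w.1, Fin.tail w.2))
        (by fun_prop) fun ⟨x, g, q⟩ => ⟨(g, Fin.cons x q), rfl⟩
    exact (SumSpace.clpCompact_prod (ih m p) hcol).of_surjective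
      (f := fun w => (Fin.cons w.1 w.2.1, w.2.2)) (by fun_prop)
      fun ⟨g, q⟩ => ⟨(g 0, Fin.tail g, q), by simp⟩

/-- If all finite products ∏_{i<n} X_{p(i)} are CLP-compact, then every finite power
of the convergent sum X is CLP-compact. -/
theorem sumSpace_finite_powers_clp (X : ℕ → Type*) [∀ i, TopologicalSpace (X i)]
    (h : ∀ (n : ℕ) (p : Fin n → ℕ), CLPCompact (∀ i : Fin n, X (p i))) :
    ∀ n : ℕ, CLPCompact (Fin n → SumSpace X) := fun n =>
  (clpCompact_pi_sumSpace_prod h n 0 Fin.elim0).of_surjective continuous_fst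
    fun g => ⟨(g, finZeroElim), rfl⟩
end
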